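/- arXiv:2305.06612 — 3 statements merged into one kernel-verified Lean document; each statement's English description precedes it below -/
import Mathlib

section
/- For every complex number ζ with nonzero imaginary part, the plasma dispersion function Z(ζ) = (1/√(2π)) ∫_ℝ e^{-v²/2}/(v-ζ) dv satisfies the differential equation dZ/dζ = -ζ Z(ζ) - 1. -/
/-!
Differentiating under the integral sign gives `Z'(ζ) = (2π)^(-1/2) ∫ e^{-v²/2} / (v - ζ)² dv`;
integrating by parts turns this into `-(2π)^(-1/2) ∫ v e^{-v²/2} / (v - ζ) dv`, and
`v / (v - ζ) = 1 + ζ / (v - ζ)` together with `∫ e^{-v²/2} dv = √(2π)` gives `-1 - ζ Z(ζ)`.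
All integrands are controlled by `|v - ζ| ≥ |Im ζ| > 0`.
-/

open MeasureTheory

/-- The plasma dispersion function `Z(ζ) = (1/√(2π)) ∫_ℝ e^{-v²/2}/(v-ζ) dv`. -/
noncomputable def plasmaZ (ζ : ℂ) : ℂ :=
  (Real.sqrt (2 * Real.pi) : ℂ)⁻¹ *
    ∫ v : ℝ, Complex.exp (-(v : ℂ) ^ 2 / 2) / ((v : ℂ) - ζ)

open Complex Filter

section CauchyTransform

variable {ζ : ℂ}

lemma abs_im_le_norm_ofReal_sub (ζ : ℂ) (v : ℝ) : |ζ.im| ≤ ‖(v : ℂ) - ζ‖ := by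
  simpa using abs_im_le_norm ((v : ℂ) - ζ)

lemma ofReal_sub_ne_zero (hζ : ζ.im ≠ 0) (v : ℝ) : (v : ℂ) - ζ ≠ 0 :=
  norm_pos_iff.mp <| (abs_pos.mpr hζ).trans_le (abs_im_le_norm_ofReal_sub ζ v)

lemma norm_div_ofReal_sub_pow_le {r : ℝ} (hr : 0 < r) (hζ : r ≤ |ζ.im|) (z : ℂ) (v : ℝ)
    (n : ℕ) : ‖z / ((v : ℂ) - ζ) ^ n‖ ≤ ‖z‖ / r ^ n := by
  rw [norm_div, norm_pow]
  exact div_le_div_of_nonneg_left (norm_nonneg z) (pow_pos hr n)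
    (pow_le_pow_left₀ hr.le (hζ.trans (abs_im_le_norm_ofReal_sub ζ v)) n)

lemma MeasureTheory.Integrable.div_ofReal_sub_pow {f : ℝ → ℂ} (hf : Integrable f)
    (hζ : ζ.im ≠ 0) (n : ℕ) : Integrable fun v : ℝ => f v / ((v : ℂ) - ζ) ^ n := by
  have hcont : Continuous fun v : ℝ => ((v : ℂ) - ζ) ^ n := by fun_prop
  refine (hf.norm.div_const (|ζ.im| ^ n)).mono'
    (hf.1.div₀ hcont.aestronglyMeasurable) ?_
  exact ae_of_all _ fun v => norm_div_ofReal_sub_pow_le (abs_pos.mpr hζ) le_rfl (f v) v n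

lemma MeasureTheory.Integrable.div_ofReal_sub {f : ℝ → ℂ} (hf : Integrable f) (hζ : ζ.im ≠ 0) :
    Integrable fun v : ℝ => f v / ((v : ℂ) - ζ) := by
  simpa using hf.div_ofReal_sub_pow hζ 1

lemma hasDerivAt_div_ofReal_sub (z : ℂ) {v : ℝ} (hv : (v : ℂ) - ζ ≠ 0) :
    HasDerivAt (fun ξ : ℂ => z / ((v : ℂ) - ξ)) (z / ((v : ℂ) - ζ) ^ 2) ζ := by
  simpa [div_eq_mul_inv] using (((hasDerivAt_id' ζ).const_sub (v : ℂ)).inv hv).const_mul z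

theorem hasDerivAt_integral_div_ofReal_sub {f : ℝ → ℂ} (hf : Integrable f) (hζ : ζ.im ≠ 0) :
    HasDerivAt (fun ξ : ℂ => ∫ v : ℝ, f v / ((v : ℂ) - ξ))
      (∫ v : ℝ, f v / ((v : ℂ) - ζ) ^ 2) ζ := by
  set r := |ζ.im| / 2 with hr_def
  have hr : 0 < r := half_pos (abs_pos.mpr hζ)
  have hball : ∀ ξ ∈ Metric.ball ζ r, r ≤ |ξ.im| := by
    intro ξ hξ
    have h_im : |ζ.im - ξ.im| ≤ ‖ξ - ζ‖ := by simpa [abs_sub_comm] using abs_im_le_norm (ξ - ζ)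
    have h_dist : ‖ξ - ζ‖ < r := mem_ball_iff_norm.mp hξ
    linarith [abs_sub_abs_le_abs_sub ζ.im ξ.im, hr_def]
  refine (hasDerivAt_integral_of_dominated_loc_of_deriv_le (Metric.ball_mem_nhds ζ hr)
    (Eventually.of_forall fun ξ =>
      hf.1.div₀ (by fun_prop : Continuous fun v : ℝ => (v : ℂ) - ξ).aestronglyMeasurable)
    (hf.div_ofReal_sub hζ) (hf.div_ofReal_sub_pow hζ 2).1
    (ae_of_all _ fun v ξ hξ => norm_div_ofReal_sub_pow_le hr (hball ξ hξ) (f v) v 2)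
    (hf.norm.div_const (r ^ 2)) (ae_of_all _ fun v ξ hξ => ?_)).2
  exact hasDerivAt_div_ofReal_sub (f v)
    (ofReal_sub_ne_zero (abs_pos.mp (hr.trans_le (hball ξ hξ))) v)

theorem integral_div_ofReal_sub_sq {f f' : ℝ → ℂ} (hf : Integrable f) (hf' : Integrable f')
    (hderiv : ∀ v, HasDerivAt f (f' v) v) (hζ : ζ.im ≠ 0) :
    ∫ v : ℝ, f v / ((v : ℂ) - ζ) ^ 2 = ∫ v : ℝ, f' v / ((v : ℂ) - ζ) := by
  have hinv (v : ℝ) : HasDerivAt (fun x : ℝ => ((x : ℂ) - ζ)⁻¹) (-1 / ((v : ℂ) - ζ) ^ 2) v := by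
    have h := ((hasDerivAt_id v).ofReal_comp.sub_const ζ).fun_inv (ofReal_sub_ne_zero hζ v)
    rw [id_eq, ofReal_one] at h
    exact h
  have hparts := integral_mul_deriv_eq_deriv_mul_of_integrable (fun v _ => hderiv v)
    (fun v _ => hinv v)
    ((hf.div_ofReal_sub_pow hζ 2).neg.congr (ae_of_all _ fun v => by simp [div_eq_mul_inv]))
    ((hf'.div_ofReal_sub hζ).congr (ae_of_all _ fun v => by simp [div_eq_mul_inv]))
    ((hf.div_ofReal_sub hζ).congr (ae_of_all _ fun v => by simp [div_eq_mul_inv]))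
  calc ∫ v : ℝ, f v / ((v : ℂ) - ζ) ^ 2 = -∫ v : ℝ, f v * (-1 / ((v : ℂ) - ζ) ^ 2) := by
        rw [← integral_neg]; congr 1; ext v; ring
    _ = ∫ v : ℝ, f' v / ((v : ℂ) - ζ) := by
        rw [hparts, neg_neg]; simp only [div_eq_mul_inv]

lemma integral_ofReal_mul_div_ofReal_sub {f : ℝ → ℂ} (hf : Integrable f) (hζ : ζ.im ≠ 0) :
    ∫ v : ℝ, (v : ℂ) * f v / ((v : ℂ) - ζ) =
      (∫ v : ℝ, f v) + ζ * ∫ v : ℝ, f v / ((v : ℂ) - ζ) := by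
  have h_split (v : ℝ) : (v : ℂ) * f v / ((v : ℂ) - ζ) = f v + ζ * (f v / ((v : ℂ) - ζ)) := by
    field_simp [ofReal_sub_ne_zero hζ v]
    ring
  simp_rw [h_split]
  rw [integral_add hf ((hf.div_ofReal_sub hζ).const_mul ζ), integral_const_mul]

end CauchyTransform

lemma integrable_cexp_neg_sq_div_two : Integrable fun v : ℝ => cexp (-(v : ℂ) ^ 2 / 2) := by
  convert integrable_cexp_neg_mul_sq (b := 1 / 2) (by norm_num) using 3
  ring

lemma integrable_ofReal_mul_cexp_neg_sq_div_two :
    Integrable fun v : ℝ => (v : ℂ) * cexp (-(v : ℂ) ^ 2 / 2) := by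
  convert integrable_mul_cexp_neg_mul_sq (b := 1 / 2) (by norm_num) using 4
  ring

lemma hasDerivAt_cexp_neg_sq_div_two (v : ℝ) :
    HasDerivAt (fun v : ℝ => cexp (-(v : ℂ) ^ 2 / 2))
      (-((v : ℂ) * cexp (-(v : ℂ) ^ 2 / 2))) v := by
  convert ((hasDerivAt_pow 2 (v : ℂ)).fun_neg.div_const 2).cexp.comp_ofReal using 1
  push_cast
  ring

lemma integral_cexp_neg_sq_div_two :
    ∫ v : ℝ, cexp (-(v : ℂ) ^ 2 / 2) = (Real.sqrt (2 * Real.pi) : ℂ) := by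
  have h_real (v : ℝ) : cexp (-(v : ℂ) ^ 2 / 2) = (Real.exp (-(1 / 2) * v ^ 2) : ℂ) := by
    push_cast
    ring_nf
  simp_rw [h_real]
  rw [integral_complex_ofReal, integral_gaussian]
  norm_num [div_div_eq_mul_div, mul_comm]

/-- For every `ζ` off the real axis, `Z' (ζ) = -ζ Z(ζ) - 1`. -/
theorem plasmaZ_hasDerivAt (ζ : ℂ) (hζ : ζ.im ≠ 0) :
    HasDerivAt plasmaZ (-ζ * plasmaZ ζ - 1) ζ := by
  refine ((hasDerivAt_integral_div_ofReal_sub integrable_cexp_neg_sq_div_two hζ).const_mul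
    (Real.sqrt (2 * Real.pi) : ℂ)⁻¹).congr_deriv ?_
  rw [integral_div_ofReal_sub_sq integrable_cexp_neg_sq_div_two
    integrable_ofReal_mul_cexp_neg_sq_div_two.fun_neg hasDerivAt_cexp_neg_sq_div_two hζ]
  -- the product pattern leaves the exponent `-v ^ 2 / 2` untouched
  simp only [neg_div _ (_ * _), integral_neg]
  rw [integral_ofReal_mul_div_ofReal_sub integrable_cexp_neg_sq_div_two hζ,
    integral_cexp_neg_sq_div_two, plasmaZ]
  field_simp
  ring
end

section
/- As ζ → 0 with Im ζ > 0, the plasma dispersion function Z(ζ) converges to i√(π/2), and as ζ → 0 with Im ζ < 0, Z(ζ) converges to -i√(π/2). -/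
/-!
For `Im ζ > 0` write `(v - ζ)⁻¹ = i ∫₀^∞ e^{-ik(v-ζ)} dk` and exchange the two integrals: since the
Gaussian is its own Fourier transform, `Z(ζ) = i ∫₀^∞ e^{ikζ} e^{-k²/2} dk`. As `|e^{ikζ}| ≤ 1` on
the closed upper half-plane, dominated convergence makes this integral continuous there, so its
limit at `0` is `i ∫₀^∞ e^{-k²/2} dk = i√(π/2)`. The lower half-plane follows because `Z` is odd.
-/

open MeasureTheory Filter

open Complex Real Set Topology Function

theorem plasmaZ_neg (ζ : ℂ) : plasmaZ (-ζ) = -plasmaZ ζ := by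
  rw [plasmaZ, plasmaZ, ← integral_neg_eq_self, ← mul_neg, ← integral_neg]
  congr 2 with v
  rw [ofReal_neg, neg_sq, neg_sub_neg, ← neg_sub, div_neg]

theorem inv_eq_I_mul_integral_Ioi {w : ℂ} (hw : w.im < 0) :
    w⁻¹ = I * ∫ k in Ioi (0 : ℝ), cexp (-I * w * k) := by
  have hw0 : w ≠ 0 := fun h => by simp [h] at hw
  rw [integral_exp_mul_complex_Ioi (by simpa using hw)]
  field_simp
  simp

theorem integral_gaussian_mul_cexp_neg_I_mul (k : ℝ) :
    ∫ v : ℝ, cexp (-(v : ℂ) ^ 2 / 2) * cexp (-I * v * k) =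
      √(2 * π) * cexp (-(k : ℂ) ^ 2 / 2) := by
  have h := fourierIntegral_gaussian (b := 1 / 2) (by norm_num) (-k)
  have hsqrt : ((π : ℂ) / (1 / 2)) ^ (1 / 2 : ℂ) = √(2 * π) := by
    rw [Real.sqrt_eq_rpow, ofReal_cpow (by positivity)]
    push_cast
    ring_nf
  rw [hsqrt] at h
  convert h using 3 with v
  · rw [mul_comm]; ring_nf
  · ring_nf

theorem plasmaZ_eq_I_mul_integral_Ioi {ζ : ℂ} (hζ : 0 < ζ.im) :
    plasmaZ ζ = I * ∫ k in Ioi (0 : ℝ), cexp (I * ζ * k) * cexp (-(k : ℂ) ^ 2 / 2) := by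
  set G : ℝ → ℂ := fun v => cexp (-(v : ℂ) ^ 2 / 2)
  have hsplit (v k : ℝ) : cexp (-I * (v - ζ) * k) = cexp (I * ζ * k) * cexp (-I * v * k) := by
    rw [← Complex.exp_add]; ring_nf
  have hint : Integrable (uncurry fun (v k : ℝ) => G v * cexp (-I * (v - ζ) * k))
      (volume.prod (volume.restrict (Ioi 0))) := by
    have hG : Integrable G := by
      simpa [G, neg_div, div_eq_inv_mul] using
        integrable_cexp_neg_mul_sq (b := 1 / 2) (by norm_num)
    have hl : IntegrableOn (fun k : ℝ => cexp (I * ζ * k)) (Ioi 0) :=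
      integrableOn_exp_mul_complex_Ioi (by simpa using hζ) 0
    refine (hG.mul_prod hl).mono (Continuous.aestronglyMeasurable (by fun_prop))
      (ae_of_all _ fun ⟨v, k⟩ => le_of_eq ?_)
    rw [uncurry_apply_pair, hsplit, norm_mul, norm_mul, norm_mul,
      show -I * v * k = ((-v * k : ℝ) : ℂ) * I by push_cast; ring, norm_exp_ofReal_mul_I, mul_one]
  have hsqrt : (√(2 * π) : ℂ) ≠ 0 := by exact_mod_cast (Real.sqrt_pos.2 (by positivity)).ne'
  calc plasmaZ ζ
      = (√(2 * π) : ℂ)⁻¹ * ∫ v : ℝ, I * ∫ k in Ioi (0 : ℝ), G v * cexp (-I * (v - ζ) * k) := by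
        rw [plasmaZ]
        congr 2 with v
        rw [div_eq_mul_inv, inv_eq_I_mul_integral_Ioi (by simpa using hζ), mul_left_comm,
          integral_const_mul]
    _ = (√(2 * π) : ℂ)⁻¹ * (I * ∫ k in Ioi (0 : ℝ), cexp (I * ζ * k) *
          ∫ v : ℝ, G v * cexp (-I * v * k)) := by
        rw [integral_const_mul, integral_integral_swap hint]
        simp_rw [hsplit, mul_left_comm _ (cexp (I * ζ * _)), integral_const_mul]
    _ = I * ∫ k in Ioi (0 : ℝ), cexp (I * ζ * k) * cexp (-(k : ℂ) ^ 2 / 2) := by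
        simp_rw [G, integral_gaussian_mul_cexp_neg_I_mul, mul_left_comm _ (√(2 * π) : ℂ),
          integral_const_mul]
        field_simp

theorem continuousOn_integral_Ioi_cexp_mul_gaussian :
    ContinuousOn (fun ζ : ℂ => ∫ k in Ioi (0 : ℝ), cexp (I * ζ * k) * cexp (-(k : ℂ) ^ 2 / 2))
      {ζ | 0 ≤ ζ.im} := by
  refine continuousOn_of_dominated (bound := fun k : ℝ => Real.exp (-(1 / 2) * k ^ 2))
    (fun ζ _ => Continuous.aestronglyMeasurable (by fun_prop)) (fun ζ hζ => ?_)
    (integrable_exp_neg_mul_sq (by norm_num)).integrableOn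
    (ae_of_all _ fun k => Continuous.continuousOn (by fun_prop))
  refine ae_restrict_of_forall_mem measurableSet_Ioi fun k hk => ?_
  rw [norm_mul, norm_exp, norm_exp, ← Real.exp_add, Real.exp_le_exp]
  have hdamp : 0 ≤ ζ.im * k := mul_nonneg hζ hk.le
  simp [← ofReal_pow]
  linarith

theorem integral_Ioi_cexp_neg_sq_half :
    ∫ k in Ioi (0 : ℝ), cexp (-(k : ℂ) ^ 2 / 2) = √(π / 2) := by
  have hsqrt : √(π / (1 / 2)) / 2 = √(π / 2) := by
    rw [show π / (1 / 2) = 2 ^ 2 * (π / 2) by ring, Real.sqrt_mul (by positivity),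
      Real.sqrt_sq (by norm_num)]
    ring
  rw [← hsqrt, ← integral_gaussian_Ioi, ← integral_complex_ofReal]
  congr 1 with k
  push_cast
  ring_nf

/-- As `ζ → 0` with `Im ζ > 0`, `Z(ζ) → i√(π/2)`; as `ζ → 0` with `Im ζ < 0`,
`Z(ζ) → -i√(π/2)`. -/
theorem plasmaZ_tendsto_zero :
    Tendsto plasmaZ (nhdsWithin 0 {ζ : ℂ | 0 < ζ.im})
      (nhds (Complex.I * (Real.sqrt (Real.pi / 2) : ℂ))) ∧
    Tendsto plasmaZ (nhdsWithin 0 {ζ : ℂ | ζ.im < 0})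
      (nhds (-Complex.I * (Real.sqrt (Real.pi / 2) : ℂ))) := by
  have upper : Tendsto plasmaZ (𝓝[{ζ : ℂ | 0 < ζ.im}] 0) (𝓝 (I * √(π / 2))) := by
    have hcont := (continuousOn_integral_Ioi_cexp_mul_gaussian 0 (by simp)).mono
      fun ζ (hζ : 0 < ζ.im) => hζ.le
    simp only [ContinuousWithinAt, mul_zero, zero_mul, Complex.exp_zero, one_mul,
      integral_Ioi_cexp_neg_sq_half] at hcont
    refine (hcont.const_mul I).congr' ?_
    filter_upwards [self_mem_nhdsWithin] with ζ hζ using (plasmaZ_eq_I_mul_integral_Ioi hζ).symm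
  have hneg : Tendsto Neg.neg (𝓝[{ζ : ℂ | ζ.im < 0}] 0) (𝓝[{ζ : ℂ | 0 < ζ.im}] 0) :=
    tendsto_nhdsWithin_iff.2 ⟨(continuous_neg.tendsto' 0 0 neg_zero).mono_left nhdsWithin_le_nhds,
      eventually_nhdsWithin_of_forall fun ζ (hζ : ζ.im < 0) => by simpa using hζ⟩
  refine ⟨upper, ?_⟩
  simpa [plasmaZ_neg] using (upper.comp hneg).neg
end

section
/- Let S: H → H be a linear operator on a Hilbert space, B = Σ_{j=0}^{m-1} ⟨·, e_j⟩ d_j e_j a finite-rank operator with orthonormal (e_j) and scalars d_j, and z in the resolvent set of both S and S − B. Define the matrices G_S(z)_{n,m} = ⟨(S − z)^{-1} e_n, e_m⟩ and G_T(z)_{n,m} = ⟨(S − B − z)^{-1} e_n, e_m⟩, and D = diag(d_0,…,d_{m-1}). Then G_T (Id − D G_S) = G_S. Consequently, if z is an eigenvalue of S − B not in the spectrum of S, then det(Id − D G_S(z)) = 0. -/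
open scoped ComplexInnerProductSpace

/-! If `R_S` inverts `S - z` and `R_T` inverts `T - z = S - B - z`, then applying `R_S` to
`(S - z) R_T x = x + B R_T x` gives the resolvent identity `R_T = R_S + R_S B R_T`. Since `B` only
sees the coefficients `⟪e_j, ·⟫`, and row `n` of `G_R` is the coefficient vector of `R e_n`,
taking coefficients turns this into `G_T = G_S + G_T D G_S`. Likewise an eigenvector `f` of `T`
satisfies `f = R_S B f`, so its coefficient vector is a nonzero left null vector of `1 - D G_S`. -/

open scoped InnerProductSpace

open Matrix

theorem LinearMap.eq_add_of_sub_sub_smul_eq {R M : Type*} [Semiring R] [AddCommGroup M]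
    [Module R M] {S L P : M →ₗ[R] M} {z : R} (hL : ∀ x, L (S x - z • x) = x) {x y : M}
    (h : S y - P y - z • y = x) : y = L x + L (P y) := by
  rw [← map_add, ← h, sub_right_comm, sub_add_cancel, hL]

section FiniteRank

variable {𝕜 E ι : Type*} [RCLike 𝕜] [NormedAddCommGroup E] [InnerProductSpace 𝕜 E]
  {e : ι → E} {d : ι → 𝕜} {P : E →ₗ[𝕜] E}

variable (𝕜) in
def innerCoeffs (e : ι → E) (x : E) : ι → 𝕜 := fun j => ⟪e j, x⟫_𝕜

theorem innerCoeffs_add (x y : E) :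
    innerCoeffs 𝕜 e (x + y) = innerCoeffs 𝕜 e x + innerCoeffs 𝕜 e y :=
  funext fun _ => inner_add_right _ _ _

variable [Fintype ι]

theorem eq_zero_of_innerCoeffs_eq_zero (hP : ∀ f, P f = ∑ j, (d j * ⟪e j, f⟫_𝕜) • e j)
    {g : E} (hg : innerCoeffs 𝕜 e g = 0) : P g = 0 := by
  rw [hP g]
  refine Finset.sum_eq_zero fun j _ => ?_
  rw [show ⟪e j, g⟫_𝕜 = 0 from congrFun hg j, mul_zero, zero_smul]

variable [DecidableEq ι]

theorem innerCoeffs_map_eq_vecMul (hP : ∀ f, P f = ∑ j, (d j * ⟪e j, f⟫_𝕜) • e j)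
    {R : E →ₗ[𝕜] E} {G : Matrix ι ι 𝕜} (hG : ∀ n k, G n k = ⟪e k, R (e n)⟫_𝕜) (g : E) :
    innerCoeffs 𝕜 e (R (P g)) = innerCoeffs 𝕜 e g ᵥ* (diagonal d * G) := by
  ext k
  simp only [innerCoeffs, hP g, map_sum, map_smul, inner_sum, inner_smul_right, vecMul,
    dotProduct, diagonal_mul, hG, mul_assoc, mul_left_comm]

variable {S RS : E →ₗ[𝕜] E} {z : 𝕜} {GS : Matrix ι ι 𝕜}

theorem mul_one_sub_diagonal_mul_eq (hP : ∀ f, P f = ∑ j, (d j * ⟪e j, f⟫_𝕜) • e j)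
    (hRS : ∀ x, RS (S x - z • x) = x) (hGS : ∀ n k, GS n k = ⟪e k, RS (e n)⟫_𝕜)
    {RT : E →ₗ[𝕜] E} (hRT : ∀ x, S (RT x) - P (RT x) - z • RT x = x)
    {GT : Matrix ι ι 𝕜} (hGT : ∀ n k, GT n k = ⟪e k, RT (e n)⟫_𝕜) :
    GT * (1 - diagonal d * GS) = GS := by
  have hrow : ∀ n, GT n = GS n + GT n ᵥ* (diagonal d * GS) := fun n => by
    have hres := LinearMap.eq_add_of_sub_sub_smul_eq hRS (hRT (e n))
    rw [show GT n = innerCoeffs 𝕜 e (RT (e n)) from funext (hGT n),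
      show GS n = innerCoeffs 𝕜 e (RS (e n)) from funext (hGS n),
      ← innerCoeffs_map_eq_vecMul hP hGS, ← innerCoeffs_add, ← hres]
  rw [mul_sub, mul_one, sub_eq_iff_eq_add]
  exact funext hrow

theorem det_one_sub_diagonal_mul_eq_zero (hP : ∀ f, P f = ∑ j, (d j * ⟪e j, f⟫_𝕜) • e j)
    (hRS : ∀ x, RS (S x - z • x) = x) (hGS : ∀ n k, GS n k = ⟪e k, RS (e n)⟫_𝕜)
    {f : E} (hf0 : f ≠ 0) (hf : S f - P f = z • f) :
    (1 - diagonal d * GS).det = 0 := by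
  have hfix : f = RS (P f) := by
    simpa using LinearMap.eq_add_of_sub_sub_smul_eq hRS (x := 0) (sub_eq_zero.mpr hf)
  refine exists_vecMul_eq_zero_iff.mp ⟨innerCoeffs 𝕜 e f, fun hc => hf0 ?_, ?_⟩
  · rw [hfix, eq_zero_of_innerCoeffs_eq_zero hP hc, map_zero]
  · rw [vecMul_sub, vecMul_one, ← innerCoeffs_map_eq_vecMul hP hGS, ← hfix, sub_self]

end FiniteRank

theorem finite_rank_perturbation_determinant_general (H : Type*) [NormedAddCommGroup H]
    [InnerProductSpace ℂ H] (m : ℕ) (e : Fin m → H)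
    (d : Fin m → ℂ) (S B : H →ₗ[ℂ] H)
    (hB : ∀ f : H, B f = ∑ j : Fin m, (d j * ⟪e j, f⟫) • e j)
    (z : ℂ) (RS : H →ₗ[ℂ] H)
    (hRS2 : ∀ x : H, RS (S x - z • x) = x)
    (GS : Matrix (Fin m) (Fin m) ℂ) (hGS : ∀ n m' : Fin m, GS n m' = ⟪e m', RS (e n)⟫) :
    (∀ RT : H →ₗ[ℂ] H,
      (∀ x : H, S (RT x) - B (RT x) - z • RT x = x) →
      (∀ x : H, RT (S x - B x - z • x) = x) →
      ∀ GT : Matrix (Fin m) (Fin m) ℂ, (∀ n m' : Fin m, GT n m' = ⟪e m', RT (e n)⟫) →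
        GT * (1 - Matrix.diagonal d * GS) = GS) ∧
    ((∃ f : H, f ≠ 0 ∧ S f - B f = z • f) →
      (1 - Matrix.diagonal d * GS).det = 0) :=
  ⟨fun _ hRT _ _ hGT => mul_one_sub_diagonal_mul_eq hB hRS2 hGS hRT hGT,
    fun ⟨_, hf0, hf⟩ => det_one_sub_diagonal_mul_eq_zero hB hRS2 hGS hf0 hf⟩

/-- Finite-rank perturbation determinant condition. Let `S` be a linear operator on a
Hilbert space, `B f = Σ_j d_j ⟨f, e_j⟩ e_j` a finite-rank operator built from an
orthonormal family `(e_j)`, and `z` in the resolvent set of `S` (witnessed by a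
two-sided inverse `RS` of `S - z`). With `G_S(n,m) = ⟨(S-z)⁻¹ e_n, e_m⟩`,
`G_T(n,m) = ⟨(S-B-z)⁻¹ e_n, e_m⟩` and `D = diag(d)`:
(1) if `z` is also in the resolvent set of `S - B`, then `G_T (Id - D G_S) = G_S`;
(2) if `z` is an eigenvalue of `S - B`, then `det(Id - D G_S) = 0`.
(Here the inner product `⟨f, g⟩` of the paper, linear in `f`, is `⟪g, f⟫` in Mathlib's
convention.) -/
theorem finite_rank_perturbation_determinant (H : Type*) [NormedAddCommGroup H]
    [InnerProductSpace ℂ H] (m : ℕ) (e : Fin m → H) (he : Orthonormal ℂ e)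
    (d : Fin m → ℂ) (S B : H →ₗ[ℂ] H)
    (hB : ∀ f : H, B f = ∑ j : Fin m, (d j * ⟪e j, f⟫) • e j)
    (z : ℂ) (RS : H →ₗ[ℂ] H)
    (hRS1 : ∀ x : H, S (RS x) - z • RS x = x) (hRS2 : ∀ x : H, RS (S x - z • x) = x)
    (GS : Matrix (Fin m) (Fin m) ℂ) (hGS : ∀ n m' : Fin m, GS n m' = ⟪e m', RS (e n)⟫) :
    (∀ RT : H →ₗ[ℂ] H,
      (∀ x : H, S (RT x) - B (RT x) - z • RT x = x) →
      (∀ x : H, RT (S x - B x - z • x) = x) →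
      ∀ GT : Matrix (Fin m) (Fin m) ℂ, (∀ n m' : Fin m, GT n m' = ⟪e m', RT (e n)⟫) →
        GT * (1 - Matrix.diagonal d * GS) = GS) ∧
    ((∃ f : H, f ≠ 0 ∧ S f - B f = z • f) →
      (1 - Matrix.diagonal d * GS).det = 0) :=
  finite_rank_perturbation_determinant_general H m e d S B hB z RS hRS2 GS hGS
end
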